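/- With notation as in the aligned-unit construction, every connected component u of the fragment graph G is jointly tokenizable: the interval covered by u is a union of consecutive complete teacher-token spans and also a union of consecutive complete student-token spans. Equivalently, both endpoints of the interval covered by u belong to B_T ∩ B_S, and no teacher or student token span crosses either endpoint. -/

import Mathlib

open Finset

/-- Two fragments with left endpoints `x` and `y` lie inside the same token span of
the tokenizer with boundary set `C` iff no boundary of `C` lies in `(min x y, max x y]`. -/
def sameSpan (C : Finset ℕ) (x y : ℕ) : Prop :=
  ∀ t ∈ C, ¬ (min x y < t ∧ t ≤ max x y)

/-- The fragment graph of the aligned-unit construction. Vertices are the atomic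
fragments of `[0, L)` determined by the union of the teacher boundaries `BT` and the
student boundaries `BS` (a fragment is identified with its left endpoint, an element
of `BT ∪ BS` smaller than `L`). Two distinct fragments are adjacent iff they lie
inside the same teacher span or the same student span. -/
def fragGraph (BT BS : Finset ℕ) (L : ℕ) :
    SimpleGraph {x : ℕ // x ∈ BT ∪ BS ∧ x < L} where
  Adj u v := u ≠ v ∧ (sameSpan BT u.1 v.1 ∨ sameSpan BS u.1 v.1)
  symm := by
    constructor
    intro u v h
    refine ⟨h.1.symm, ?_⟩
    rcases h.2 with h' | h'
    · exact Or.inl fun t ht hc => h' t ht (by rwa [min_comm, max_comm] at hc)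
    · exact Or.inr fun t ht hc => h' t ht (by rwa [min_comm, max_comm] at hc)
  loopless := ⟨fun u h => h.1 rfl⟩

/-!
The component of a fragment `j` is the run of fragments between the nearest common
boundaries `a ≤ j < b` of `BT ∩ BS`. A common boundary separates the teacher spans and the
student spans alike, so no edge crosses it and components never leave `[a, b)`. Conversely,
each fragment in `(a, b)` starts at a point missing from `BT` or from `BS`; on that side it
shares a span with the preceding fragment, so walking back fragment by fragment reaches `a`.
-/

theorem sameSpan.lt_iff {C : Finset ℕ} {x y c : ℕ} (h : sameSpan C x y) (hc : c ∈ C) :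
    x < c ↔ y < c := by
  have := h c hc
  omega

theorem sameSpan_of_lt_of_notMem {C : Finset ℕ} {x y : ℕ} (hxy : x < y) (hy : y ∉ C)
    (hpred : ∀ t ∈ C, t < y → t ≤ x) : sameSpan C x y := by
  rintro t ht ⟨hxt, hty⟩
  rw [min_eq_left hxy.le] at hxt
  rw [max_eq_right hxy.le] at hty
  rcases hty.lt_or_eq with hty | rfl
  · exact (hpred t ht hty).not_gt hxt
  · exact hy ht

theorem le_and_le_of_consecutive {C : Finset ℕ} {a b x y : ℕ} (ha : a ∈ C) (hb : b ∈ C)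
    (hcons : ∀ t ∈ C, ¬ (x < t ∧ t < y)) (hxb : x < b) (hay : a < y) : a ≤ x ∧ y ≤ b :=
  ⟨not_lt.1 fun h => hcons a ha ⟨h, hay⟩, not_lt.1 fun h => hcons b hb ⟨hxb, h⟩⟩

theorem Finset.exists_consecutive_mem_around (D : Finset ℕ) {d₀ d₁ j : ℕ} (hd₀ : d₀ ∈ D)
    (hd₀j : d₀ ≤ j) (hd₁ : d₁ ∈ D) (hjd₁ : j < d₁) :
    ∃ a ∈ D, ∃ b ∈ D, a ≤ j ∧ j < b ∧ ∀ c ∈ D, a < c → b ≤ c := by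
  have hlo : (D.filter (· ≤ j)).Nonempty := ⟨d₀, mem_filter.2 ⟨hd₀, hd₀j⟩⟩
  have hhi : (D.filter (j < ·)).Nonempty := ⟨d₁, mem_filter.2 ⟨hd₁, hjd₁⟩⟩
  obtain ⟨haD, haj⟩ := mem_filter.1 ((D.filter (· ≤ j)).max'_mem hlo)
  obtain ⟨hbD, hjb⟩ := mem_filter.1 ((D.filter (j < ·)).min'_mem hhi)
  refine ⟨_, haD, _, hbD, haj, hjb, fun c hc hac => ?_⟩
  have hjc : j < c := not_le.1 fun hcj => (le_max' _ c (mem_filter.2 ⟨hc, hcj⟩)).not_gt hac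
  exact min'_le _ c (mem_filter.2 ⟨hc, hjc⟩)

theorem Finset.exists_max_lt {D : Finset ℕ} {a n : ℕ} (ha : a ∈ D) (han : a < n) :
    ∃ p ∈ D, a ≤ p ∧ p < n ∧ ∀ t ∈ D, t < n → t ≤ p := by
  have hne : (D.filter (· < n)).Nonempty := ⟨a, mem_filter.2 ⟨ha, han⟩⟩
  obtain ⟨hpD, hpn⟩ := mem_filter.1 ((D.filter (· < n)).max'_mem hne)
  exact ⟨_, hpD, le_max' _ a (mem_filter.2 ⟨ha, han⟩), hpn,
    fun t ht htn => le_max' _ t (mem_filter.2 ⟨ht, htn⟩)⟩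

namespace fragGraph

variable {BT BS : Finset ℕ} {L : ℕ}

theorem Adj.lt_iff {u v : {x : ℕ // x ∈ BT ∪ BS ∧ x < L}} (h : (fragGraph BT BS L).Adj u v)
    {c : ℕ} (hcT : c ∈ BT) (hcS : c ∈ BS) : u.1 < c ↔ v.1 < c :=
  h.2.elim (·.lt_iff hcT) (·.lt_iff hcS)

theorem Reachable.lt_iff {u v : {x : ℕ // x ∈ BT ∪ BS ∧ x < L}}
    (h : (fragGraph BT BS L).Reachable u v) {c : ℕ} (hcT : c ∈ BT) (hcS : c ∈ BS) :
    u.1 < c ↔ v.1 < c := by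
  rw [SimpleGraph.reachable_iff_reflTransGen] at h
  induction h with
  | refl => rfl
  | tail _ hadj ih => exact ih.trans (Adj.lt_iff hadj hcT hcS)

theorem adj_of_pred {u v : {x : ℕ // x ∈ BT ∪ BS ∧ x < L}} (huv : u.1 < v.1)
    (hpred : ∀ t ∈ BT ∪ BS, t < v.1 → t ≤ u.1) (hv : ¬ (v.1 ∈ BT ∧ v.1 ∈ BS)) :
    (fragGraph BT BS L).Adj u v := by
  refine ⟨fun h => huv.ne (congrArg Subtype.val h), ?_⟩
  by_cases hvT : v.1 ∈ BT
  · exact Or.inr <| sameSpan_of_lt_of_notMem huv (fun hvS => hv ⟨hvT, hvS⟩)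
      fun t ht => hpred t (mem_union_right _ ht)
  · exact Or.inl <| sameSpan_of_lt_of_notMem huv hvT fun t ht => hpred t (mem_union_left _ ht)

theorem reachable_of_no_common_boundary {u v : {x : ℕ // x ∈ BT ∪ BS ∧ x < L}}
    (huv : u.1 ≤ v.1) (hgap : ∀ c ∈ BT, c ∈ BS → u.1 < c → v.1 < c) :
    (fragGraph BT BS L).Reachable u v := by
  obtain ⟨n, hn⟩ := v
  induction n using Nat.strong_induction_on with
  | _ n ih =>
    rcases huv.lt_or_eq with hun | hun
    · obtain ⟨p, hp, hup, hpn, hpred⟩ := exists_max_lt u.2.1 hun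
      have hpL : p < L := hpn.trans hn.2
      have hreach : (fragGraph BT BS L).Reachable u ⟨p, hp, hpL⟩ :=
        ih p hpn ⟨hp, hpL⟩ hup fun c hcT hcS huc => hpn.trans (hgap c hcT hcS huc)
      exact hreach.trans (adj_of_pred hpn hpred fun h => (hgap n h.1 h.2 hun).false).reachable
    · exact (Subtype.ext hun : u = ⟨n, hn⟩) ▸ SimpleGraph.Reachable.refl u

end fragGraph

theorem stmt5_general (L : ℕ) (BT BS : Finset ℕ)
    (h0T : 0 ∈ BT) (hLT : L ∈ BT) (h0S : 0 ∈ BS) (hLS : L ∈ BS) :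
    ∀ j : {x : ℕ // x ∈ BT ∪ BS ∧ x < L},
      ∃ a b : ℕ, a ∈ BT ∧ a ∈ BS ∧ b ∈ BT ∧ b ∈ BS ∧
        (∀ j' : {x : ℕ // x ∈ BT ∪ BS ∧ x < L},
          (fragGraph BT BS L).Reachable j j' ↔ (a ≤ j'.1 ∧ j'.1 < b)) ∧
        (∀ x ∈ BT, ∀ y ∈ BT, x < y → (∀ t ∈ BT, ¬ (x < t ∧ t < y)) →
          x < b → a < y → a ≤ x ∧ y ≤ b) ∧
        (∀ x ∈ BS, ∀ y ∈ BS, x < y → (∀ t ∈ BS, ¬ (x < t ∧ t < y)) →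
          x < b → a < y → a ≤ x ∧ y ≤ b) := by
  intro j
  obtain ⟨a, ha, b, hb, haj, hjb, hgap⟩ := (BT ∩ BS).exists_consecutive_mem_around
    (mem_inter.2 ⟨h0T, h0S⟩) (Nat.zero_le j.1) (mem_inter.2 ⟨hLT, hLS⟩) j.2.2
  obtain ⟨haT, haS⟩ := mem_inter.1 ha
  obtain ⟨hbT, hbS⟩ := mem_inter.1 hb
  let ja : {x : ℕ // x ∈ BT ∪ BS ∧ x < L} := ⟨a, mem_union_left _ haT, haj.trans_lt j.2.2⟩
  have hfrom_a : ∀ v : {x : ℕ // x ∈ BT ∪ BS ∧ x < L}, a ≤ v.1 → v.1 < b →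
      (fragGraph BT BS L).Reachable ja v := fun v hav hvb =>
    fragGraph.reachable_of_no_common_boundary hav fun c hcT hcS hac =>
      hvb.trans_le (hgap c (mem_inter.2 ⟨hcT, hcS⟩) hac)
  refine ⟨a, b, haT, haS, hbT, hbS, fun j' => ⟨fun h => ?_, fun h => ?_⟩,
    fun x _ y _ _ hcons => le_and_le_of_consecutive haT hbT hcons,
    fun x _ y _ _ hcons => le_and_le_of_consecutive haS hbS hcons⟩
  · exact ⟨not_lt.1 ((fragGraph.Reachable.lt_iff h haT haS).not.1 haj.not_gt),
      (fragGraph.Reachable.lt_iff h hbT hbS).1 hjb⟩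
  · exact (hfrom_a j haj hjb).symm.trans (hfrom_a j' h.1 h.2)

/-- **Joint tokenizability of aligned units.** For every fragment `j`, the connected
component of `j` in the fragment graph covers an interval `[a, b)` whose endpoints
belong to both boundary sets (`a, b ∈ BT` and `a, b ∈ BS`); moreover every complete
teacher-token span and every complete student-token span that meets `(a, b)` is
contained in `[a, b]`, i.e. the interval covered by the component is a union of
consecutive complete teacher spans and also of consecutive complete student spans,
and no teacher or student span crosses either endpoint. -/
theorem stmt5 (L : ℕ) (BT BS : Finset ℕ)
    (h0T : 0 ∈ BT) (hLT : L ∈ BT) (h0S : 0 ∈ BS) (hLS : L ∈ BS)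
    (hTle : ∀ x ∈ BT, x ≤ L) (hSle : ∀ x ∈ BS, x ≤ L) :
    ∀ j : {x : ℕ // x ∈ BT ∪ BS ∧ x < L},
      ∃ a b : ℕ, a ∈ BT ∧ a ∈ BS ∧ b ∈ BT ∧ b ∈ BS ∧
        (∀ j' : {x : ℕ // x ∈ BT ∪ BS ∧ x < L},
          (fragGraph BT BS L).Reachable j j' ↔ (a ≤ j'.1 ∧ j'.1 < b)) ∧
        (∀ x ∈ BT, ∀ y ∈ BT, x < y → (∀ t ∈ BT, ¬ (x < t ∧ t < y)) →
          x < b → a < y → a ≤ x ∧ y ≤ b) ∧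
        (∀ x ∈ BS, ∀ y ∈ BS, x < y → (∀ t ∈ BS, ¬ (x < t ∧ t < y)) →
          x < b → a < y → a ≤ x ∧ y ≤ b) :=
  stmt5_general L BT BS h0T hLT h0S hLS
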